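/- Let S = N ⋊ A with A abelian acting on N, and suppose Haar measure on S is the product of Haar measures on N and A (A acting by measure-preserving automorphisms). For f, g ∈ L¹(S) define the convolution g ∗ f(x) = ∫_S f(y⁻¹x) g(y) dy. Then for the extended function f̃ on Λ = N × A × A given by f̃(n,a,b) = f(τ(a)(n), ab), the convolution of g against f̃ in the S-variables (n,b) equals the convolution of f̃ against g on the commutative product structure in the variables (n,a): g ∗ f̃(n,a,b) = f̃ ∗_c g(n,a,b). -/

import Mathlib

open MeasureTheory

/-- The extension f̃ of f : S = N ⋊[τ] A → ℂ to Λ = N × A × A,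
f̃(n,a,b) = f(τ(a)(n), a·b). -/
def fTilde {N A : Type*} [Group N] [CommGroup A] (τ : A →* MulAut N)
    (f : N ⋊[τ] A → ℂ) (x : N × A × A) : ℂ :=
  f ⟨τ x.2.1 x.1, x.2.1 * x.2.2⟩

theorem fTilde_tau_apply_mul {N A : Type*} [Group N] [CommGroup A] (τ : A →* MulAut N)
    (f : N ⋊[τ] A → ℂ) (y : N) (a b c : A) :
    fTilde τ f (τ c y, a, c * b) = fTilde τ f (y, a * c, b) := by
  simp only [fTilde, ← MulAut.mul_apply, ← map_mul, mul_assoc]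

theorem stmt16_general {N A : Type*} [Group N] [CommGroup A]
    [MeasurableSpace N] [MeasurableSpace A]
    (τ : A →* MulAut N)
    (ν : Measure N) (α : Measure A)
    (f g : N ⋊[τ] A → ℂ) :
    ∀ x : N, ∀ a b : A,
      -- g ∗ f̃ in the S-variables (n, b):
      --   f̃((m,q)⁻¹·(n,·,b)) = f̃(τ(q⁻¹)(m⁻¹·n), a, q⁻¹·b)
      (∫ p : N × A, fTilde τ f (τ p.2⁻¹ (p.1⁻¹ * x), a, p.2⁻¹ * b) * g ⟨p.1, p.2⟩
          ∂(ν.prod α))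
      =
      -- f̃ ∗_c g in the commutative variables (n, a) of the direct product N × A
      (∫ p : N × A, fTilde τ f (p.1⁻¹ * x, a * p.2⁻¹, b) * g ⟨p.1, p.2⟩
          ∂(ν.prod α)) := by
  intro x a b
  simp only [fTilde_tau_apply_mul]

/-- for S = N ⋊ A with A abelian acting by measure-preserving
automorphisms and Haar measure on S the product ν × α, the convolution of
g against f̃ in the S-variables (n,b) agrees with the convolution of f̃ against g
in the commutative product structure in the variables (n,a):
g ∗ f̃ (n,a,b) = f̃ ∗_c g (n,a,b). -/
theorem stmt16 {N A : Type*} [Group N] [CommGroup A]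
    [TopologicalSpace N] [IsTopologicalGroup N] [LocallyCompactSpace N]
    [MeasurableSpace N] [BorelSpace N]
    [TopologicalSpace A] [IsTopologicalGroup A] [LocallyCompactSpace A]
    [MeasurableSpace A] [BorelSpace A]
    (τ : A →* MulAut N)
    (ν : Measure N) (α : Measure A)
    [ν.IsHaarMeasure] [α.IsHaarMeasure]
    (hτ : ∀ a : A, MeasurePreserving (τ a) ν ν)
    (f g : N ⋊[τ] A → ℂ)
    (hf : Integrable (fun p : N × A => f ⟨p.1, p.2⟩) (ν.prod α))
    (hg : Integrable (fun p : N × A => g ⟨p.1, p.2⟩) (ν.prod α)) :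
    ∀ x : N, ∀ a b : A,
      -- g ∗ f̃ in the S-variables (n, b):
      --   f̃((m,q)⁻¹·(n,·,b)) = f̃(τ(q⁻¹)(m⁻¹·n), a, q⁻¹·b)
      (∫ p : N × A, fTilde τ f (τ p.2⁻¹ (p.1⁻¹ * x), a, p.2⁻¹ * b) * g ⟨p.1, p.2⟩
          ∂(ν.prod α))
      =
      -- f̃ ∗_c g in the commutative variables (n, a) of the direct product N × A
      (∫ p : N × A, fTilde τ f (p.1⁻¹ * x, a * p.2⁻¹, b) * g ⟨p.1, p.2⟩
          ∂(ν.prod α)) :=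
  stmt16_general τ ν α f g
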